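/- arXiv:1005.3324 — 5 statements merged into one kernel-verified Lean document; each statement's English description precedes it below -/
import Mathlib

section
/- Let x* be an extreme point of {x ∈ ℝ^n : 0 ≤ x ≤ d, A x ≤ b} with A a k×n matrix, and let c ∈ ℝ^n be nonnegative with c_max = max_i c_i. Then c · ⌊x*⌋ ≥ c · x* − k · c_max, where ⌊x*⌋ denotes the componentwise floor. -/
/-!
Only coordinates strictly between their bounds can be fractional, and an extreme point has at
most `k` of them: otherwise some `v ≠ 0` supported on them has `A v = 0`, and `x ± ε v` stays in
the polyhedron for small `ε`, so `x` is not extreme. Each fractional coordinate loses less than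
`cmax` when rounded down.
-/

open Finset Filter Topology Matrix

lemma Matrix.exists_ne_zero_mulVec_eq_zero_of_card_lt {K ι κ : Type*} [Field K] [Fintype ι]
    [Fintype κ] (A : Matrix κ ι K) {S : Finset ι} (h : Fintype.card κ < #S) :
    ∃ v ≠ 0, (∀ i ∉ S, v i = 0) ∧ A *ᵥ v = 0 := by
  set f := A.mulVecLin ∘ₗ Function.ExtendByZero.linearMap K ((↑) : S → ι)
  have hker : LinearMap.ker f ≠ ⊥ := LinearMap.ker_ne_bot_of_finrank_lt (by simpa using h)
  obtain ⟨w, hw, hw0⟩ := (Submodule.ne_bot_iff _).1 hker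
  refine ⟨Function.extend (↑) w 0, fun h0 => hw0 ?_, fun i hi => ?_, ?_⟩
  · ext i
    simpa [Subtype.val_injective.extend_apply] using congrFun h0 i
  · exact Function.extend_apply' _ _ _ (by simpa using hi)
  · exact hw

lemma eq_zero_of_eventually_add_smul_mem_of_mem_extremePoints {E : Type*} [AddCommGroup E]
    [Module ℝ E] {C : Set E} {x v : E} (hx : x ∈ C.extremePoints ℝ)
    (h : ∀ᶠ t in 𝓝 (0 : ℝ), x + t • v ∈ C) : v = 0 := by
  have h₂ : ∀ᶠ t in 𝓝[>] (0 : ℝ), x + t • v ∈ C ∧ x + (-t) • v ∈ C :=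
    (h.and ((continuous_neg.tendsto' 0 0 neg_zero).eventually h)).filter_mono nhdsWithin_le_nhds
  obtain ⟨ε, ⟨hε₁, hε₂⟩, hε⟩ := (h₂.and self_mem_nhdsWithin).exists
  have hseg : x ∈ openSegment ℝ (x + ε • v) (x + (-ε) • v) :=
    ⟨1 / 2, 1 / 2, by norm_num, by norm_num, by norm_num, by module⟩
  have : ε • v = 0 := by simpa using hx.2 hε₁ hε₂ hseg
  exact (smul_eq_zero.1 this).resolve_left (ne_of_gt hε)

lemma card_filter_pos_and_lt_le_of_mem_extremePoints {ι κ : Type*} [Fintype ι] [Fintype κ]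
    {A : Matrix κ ι ℝ} {b : κ → ℝ} {u x : ι → ℝ}
    (hx : x ∈ Set.extremePoints ℝ {y : ι → ℝ | 0 ≤ y ∧ (∀ i, y i ≤ u i) ∧ A *ᵥ y ≤ b}) :
    #{i | 0 < x i ∧ x i < u i} ≤ Fintype.card κ := by
  by_contra! hcard
  obtain ⟨v, hv0, hvS, hAv⟩ := A.exists_ne_zero_mulVec_eq_zero_of_card_lt hcard
  refine hv0 (eq_zero_of_eventually_add_smul_mem_of_mem_extremePoints hx ?_)
  obtain ⟨hx0, hxu, hxA⟩ := hx.1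
  have hfree : ∀ᶠ t in 𝓝 (0 : ℝ), ∀ i ∈ ({i | 0 < x i ∧ x i < u i} : Finset ι),
      x i + t * v i ∈ Set.Ioo 0 (u i) := by
    refine (eventually_all_finset _).2 fun i hi => ?_
    rw [mem_filter] at hi
    exact ((continuous_const.add (continuous_id.mul continuous_const)).tendsto' 0 (x i)
      (by simp)).eventually (Ioo_mem_nhds hi.2.1 hi.2.2)
  filter_upwards [hfree] with t ht
  have hbox : ∀ i, x i + t * v i ∈ Set.Icc 0 (u i) := fun i => by
    by_cases hi : 0 < x i ∧ x i < u i
    · exact Set.Ioo_subset_Icc_self (ht i (by simpa using hi))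
    · rw [hvS i (by simpa using hi), mul_zero, add_zero]
      exact ⟨hx0 i, hxu i⟩
  exact ⟨fun i => (hbox i).1, fun i => (hbox i).2,
    by simpa [mulVec_add, mulVec_smul, hAv] using hxA⟩

lemma Int.pos_and_lt_of_fract_ne_zero {R : Type*} [Ring R] [LinearOrder R]
    [IsStrictOrderedRing R] [FloorRing R] {a : R} {n : ℤ} (h0 : 0 ≤ a) (hn : a ≤ n)
    (h : Int.fract a ≠ 0) :
    0 < a ∧ a < n :=
  ⟨h0.lt_of_ne (by rintro rfl; simp at h), hn.lt_of_ne (by rintro rfl; simp at h)⟩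

lemma sum_mul_fract_le_card_nsmul {R ι : Type*} [Ring R] [LinearOrder R] [IsStrictOrderedRing R]
    [FloorRing R] (s : Finset ι) {c x : ι → R} {M : R} (hc : ∀ i, 0 ≤ c i) (hM : ∀ i, c i ≤ M) :
    ∑ i ∈ s, c i * Int.fract (x i) ≤ #{i ∈ s | Int.fract (x i) ≠ 0} • M := by
  rw [← sum_filter_of_ne fun i _ h => right_ne_zero_of_mul h]
  exact sum_le_card_nsmul _ _ _ fun i _ =>
    (mul_le_of_le_one_right (hc i) (Int.fract_lt_one _).le).trans (hM i)

theorem floor_extremePoint_cost_general (n k : ℕ)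
    (A : Matrix (Fin k) (Fin n) ℝ) (b : Fin k → ℝ) (d : Fin n → ℤ)
    (c : Fin n → ℝ) (cmax : ℝ)
    (hc : ∀ i, 0 ≤ c i)
    (hcmax : IsGreatest (Set.range c) cmax)
    (x : Fin n → ℝ)
    (hx : x ∈ Set.extremePoints ℝ
      {y : Fin n → ℝ | 0 ≤ y ∧ (∀ i, y i ≤ (d i : ℝ)) ∧ A.mulVec y ≤ b}) :
    ∑ i, c i * (⌊x i⌋ : ℝ) ≥ (∑ i, c i * x i) - k * cmax := by
  obtain ⟨hx0, hxd, -⟩ := hx.1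
  have hfract : #{i | Int.fract (x i) ≠ 0} ≤ k := calc
    _ ≤ #{i | 0 < x i ∧ x i < d i} := card_le_card fun i hi => by
      simp only [mem_filter, mem_univ, true_and] at hi ⊢
      exact Int.pos_and_lt_of_fract_ne_zero (hx0 i) (hxd i) hi
    _ ≤ k := by simpa using card_filter_pos_and_lt_le_of_mem_extremePoints hx
  have hcmax0 : 0 ≤ cmax := by
    obtain ⟨j, rfl⟩ := hcmax.1
    exact hc j
  have hloss : ∑ i, c i * Int.fract (x i) ≤ k * cmax := calc
    _ ≤ #{i | Int.fract (x i) ≠ 0} • cmax :=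
      sum_mul_fract_le_card_nsmul univ hc fun i => hcmax.2 ⟨i, rfl⟩
    _ ≤ k * cmax := by rw [nsmul_eq_mul]; gcongr
  have hsplit : ∑ i, c i * x i = ∑ i, c i * (⌊x i⌋ : ℝ) + ∑ i, c i * Int.fract (x i) := by
    simp [← Int.self_sub_floor, mul_sub]
  linarith

/-- Rounding down an extreme point of the knapsack LP loses at most `k * cmax`. -/
theorem floor_extremePoint_cost (n k : ℕ)
    (A : Matrix (Fin k) (Fin n) ℝ) (b : Fin k → ℝ) (d : Fin n → ℤ)
    (c : Fin n → ℝ) (cmax : ℝ)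
    (hA : ∀ i j, 0 ≤ A i j) (hc : ∀ i, 0 ≤ c i)
    (hcmax : IsGreatest (Set.range c) cmax)
    (x : Fin n → ℝ)
    (hx : x ∈ Set.extremePoints ℝ
      {y : Fin n → ℝ | 0 ≤ y ∧ (∀ i, y i ≤ (d i : ℝ)) ∧ A.mulVec y ≤ b}) :
    ∑ i, c i * (⌊x i⌋ : ℝ) ≥ (∑ i, c i * x i) - k * cmax :=
  floor_extremePoint_cost_general n k A b d c cmax hc hcmax x hx
end

section
/- Let P1 = {x ∈ ℝ^n : A1 x ≤ b1} and P2 = {x ∈ ℝ^n : A2 x ≤ b2} be nonempty polytopes (bounded polyhedra). Then the convex hull of P1 ∪ P2 equals the set Q = {x : ∃ x1, x2 ∈ ℝ^n, ∃ λ ∈ [0,1], x = x1 + x2, A1 x1 ≤ λ b1, A2 x2 ≤ (1−λ) b2}. -/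
/-!
Writing a point `l • y1 + (1 - l) • y2` of the hull as `x1 + x2` with `x1 = l • y1` and
`x2 = (1 - l) • y2` turns the constraints `A1 y1 ≤ b1`, `A2 y2 ≤ b2` into constraints linear in
`(x1, x2, l)`, so the resulting set is convex and contains both polytopes. Conversely, for
`0 < l < 1` one divides by `l` and `1 - l`; for `l = 0` the constraint `A1 x1 ≤ 0` puts `x1` in the
recession cone of `P1`, which is trivial because `P1` is nonempty and bounded (symmetrically
for `l = 1`).
-/

open Matrix Set

lemma eq_zero_of_forall_add_smul_mem {E : Type*} [NormedAddCommGroup E] [NormedSpace ℝ E]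
    {S : Set E} (hS : Bornology.IsBounded S) {p v : E}
    (hray : ∀ t : ℝ, 0 ≤ t → p + t • v ∈ S) : v = 0 := by
  obtain ⟨R, hR⟩ := hS.subset_closedBall p
  by_contra hv
  have hv : 0 < ‖v‖ := norm_pos_iff.mpr hv
  have ht : 0 ≤ (|R| + 1) / ‖v‖ := by positivity
  have hdist : ‖((|R| + 1) / ‖v‖) • v‖ ≤ R := by
    simpa [dist_eq_norm] using hR (hray _ ht)
  rw [norm_smul, Real.norm_of_nonneg ht, div_mul_cancel₀ _ hv.ne'] at hdist
  linarith [le_abs_self R]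

section Polyhedron

variable {m n : Type*} [Fintype n] {A : Matrix m n ℝ} {b : m → ℝ}

lemma mulVec_add_smul_le {p v : n → ℝ} (hp : A *ᵥ p ≤ b) (hv : A *ᵥ v ≤ 0) {t : ℝ}
    (ht : 0 ≤ t) : A *ᵥ (p + t • v) ≤ b := by
  rw [mulVec_add, mulVec_smul]
  simpa using add_le_add hp (smul_nonpos_of_nonneg_of_nonpos ht hv)

lemma eq_zero_of_mulVec_nonpos (hne : {x : n → ℝ | A *ᵥ x ≤ b}.Nonempty)
    (hbd : Bornology.IsBounded {x : n → ℝ | A *ᵥ x ≤ b}) {v : n → ℝ} (hv : A *ᵥ v ≤ 0) :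
    v = 0 :=
  let ⟨_, hp⟩ := hne
  eq_zero_of_forall_add_smul_mem hbd fun _ ht ↦ mulVec_add_smul_le hp hv ht

lemma mulVec_smul_add_smul_le {x y : n → ℝ} {l l' a c : ℝ} (hx : A *ᵥ x ≤ l • b)
    (hy : A *ᵥ y ≤ l' • b) (ha : 0 ≤ a) (hc : 0 ≤ c) :
    A *ᵥ (a • x + c • y) ≤ (a * l + c * l') • b := by
  rw [mulVec_add, mulVec_smul, mulVec_smul, add_smul, mul_smul, mul_smul]
  exact add_le_add (smul_le_smul_of_nonneg_left hx ha) (smul_le_smul_of_nonneg_left hy hc)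

lemma mulVec_inv_smul_le {x : n → ℝ} {l : ℝ} (hl : 0 < l) (hx : A *ᵥ x ≤ l • b) :
    A *ᵥ (l⁻¹ • x) ≤ b := by
  rw [mulVec_smul, ← inv_smul_smul₀ hl.ne' b]
  exact smul_le_smul_of_nonneg_left hx (inv_nonneg.mpr hl.le)

end Polyhedron

section Balas

variable {m1 m2 n : Type*} [Fintype n] (A1 : Matrix m1 n ℝ) (b1 : m1 → ℝ)
  (A2 : Matrix m2 n ℝ) (b2 : m2 → ℝ)

def balasSet : Set (n → ℝ) :=
  {x | ∃ x1 x2 : n → ℝ, ∃ l : ℝ, 0 ≤ l ∧ l ≤ 1 ∧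
    x = x1 + x2 ∧ A1 *ᵥ x1 ≤ l • b1 ∧ A2 *ᵥ x2 ≤ (1 - l) • b2}

lemma convex_balasSet : Convex ℝ (balasSet A1 b1 A2 b2) := by
  rintro _ ⟨x1, x2, l, hl0, hl1, rfl, hx1, hx2⟩ _ ⟨y1, y2, l', hl0', hl1', rfl, hy1, hy2⟩
    a c ha hc hac
  refine ⟨a • x1 + c • y1, a • x2 + c • y2, a * l + c * l', by positivity, by nlinarith,
    by module, mulVec_smul_add_smul_le hx1 hy1 ha hc, ?_⟩
  convert mulVec_smul_add_smul_le hx2 hy2 ha hc using 2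
  linear_combination -hac

lemma subset_balasSet_left : {x | A1 *ᵥ x ≤ b1} ⊆ balasSet A1 b1 A2 b2 :=
  fun x hx ↦ ⟨x, 0, 1, zero_le_one, le_rfl, (add_zero x).symm, by simpa using hx, by simp⟩

lemma subset_balasSet_right : {x | A2 *ᵥ x ≤ b2} ⊆ balasSet A1 b1 A2 b2 :=
  fun x hx ↦ ⟨0, x, 0, le_rfl, zero_le_one, (zero_add x).symm, by simp, by simpa using hx⟩

variable {A1 b1 A2 b2}

lemma balasSet_subset_convexHull
    (hne1 : {x : n → ℝ | A1 *ᵥ x ≤ b1}.Nonempty) (hne2 : {x : n → ℝ | A2 *ᵥ x ≤ b2}.Nonempty)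
    (hbd1 : Bornology.IsBounded {x : n → ℝ | A1 *ᵥ x ≤ b1})
    (hbd2 : Bornology.IsBounded {x : n → ℝ | A2 *ᵥ x ≤ b2}) :
    balasSet A1 b1 A2 b2 ⊆ convexHull ℝ ({x : n → ℝ | A1 *ᵥ x ≤ b1} ∪ {x | A2 *ᵥ x ≤ b2}) := by
  rintro _ ⟨x1, x2, l, hl0, hl1, rfl, hx1, hx2⟩
  rcases hl0.eq_or_lt with rfl | hl0
  · rw [eq_zero_of_mulVec_nonpos hne1 hbd1 (v := x1) (by simpa using hx1), zero_add]
    exact subset_convexHull ℝ _ (Or.inr (by simpa using hx2))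
  rcases hl1.eq_or_lt with rfl | hl1
  · rw [eq_zero_of_mulVec_nonpos hne2 hbd2 (v := x2) (by simpa using hx2), add_zero]
    exact subset_convexHull ℝ _ (Or.inl (by simpa using hx1))
  have hl1 : 0 < 1 - l := sub_pos.mpr hl1
  have hx : x1 + x2 = l • (l⁻¹ • x1) + (1 - l) • ((1 - l)⁻¹ • x2) := by
    simp [smul_smul, hl0.ne', hl1.ne']
  rw [hx]
  exact convex_convexHull ℝ _
    (subset_convexHull ℝ _ (mem_union_left _ (mulVec_inv_smul_le hl0 hx1)))
    (subset_convexHull ℝ _ (mem_union_right _ (mulVec_inv_smul_le hl1 hx2))) hl0.le hl1.le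
    (add_sub_cancel l 1)

end Balas

/-- Balas's disjunctive formulation of the convex hull of the union of two
nonempty polytopes. -/
theorem convexHull_union_two_polytopes (n m1 m2 : ℕ)
    (A1 : Matrix (Fin m1) (Fin n) ℝ) (b1 : Fin m1 → ℝ)
    (A2 : Matrix (Fin m2) (Fin n) ℝ) (b2 : Fin m2 → ℝ)
    (hne1 : {x : Fin n → ℝ | A1.mulVec x ≤ b1}.Nonempty)
    (hne2 : {x : Fin n → ℝ | A2.mulVec x ≤ b2}.Nonempty)
    (hbd1 : Bornology.IsBounded {x : Fin n → ℝ | A1.mulVec x ≤ b1})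
    (hbd2 : Bornology.IsBounded {x : Fin n → ℝ | A2.mulVec x ≤ b2}) :
    convexHull ℝ ({x : Fin n → ℝ | A1.mulVec x ≤ b1} ∪
        {x : Fin n → ℝ | A2.mulVec x ≤ b2}) =
      {x : Fin n → ℝ | ∃ x1 x2 : Fin n → ℝ, ∃ l : ℝ, 0 ≤ l ∧ l ≤ 1 ∧
        x = x1 + x2 ∧ A1.mulVec x1 ≤ l • b1 ∧ A2.mulVec x2 ≤ (1 - l) • b2} := by
  change _ = balasSet A1 b1 A2 b2
  exact (convexHull_min (union_subset (subset_balasSet_left A1 b1 A2 b2)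
    (subset_balasSet_right A1 b1 A2 b2)) (convex_balasSet A1 b1 A2 b2)).antisymm
    (balasSet_subset_convexHull hne1 hne2 hbd1 hbd2)
end

section
/- Let P1, ..., Pm ⊆ ℝ^n be nonempty polytopes with Pi = {x : Ai x ≤ bi}. Then conv(P1 ∪ ⋯ ∪ Pm) = {x : ∃ x^1,...,x^m, ∃ λ ∈ ℝ^m, λ ≥ 0, ∑_i λ_i = 1, x = ∑_i x^i, and Ai x^i ≤ λ_i bi for all i}. -/
-- recession cone of bounded nonempty polyhedron is {0}
lemma ray_zero {r n : ℕ} (A : Matrix (Fin r) (Fin n) ℝ) (b : Fin r → ℝ)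
    (hbd : Bornology.IsBounded {x : Fin n → ℝ | A.mulVec x ≤ b})
    (p : Fin n → ℝ) (hp : A.mulVec p ≤ b)
    (v : Fin n → ℝ) (hv : A.mulVec v ≤ 0) : v = 0 := by
  by_contra hv0
  obtain ⟨C, hC⟩ := isBounded_iff_forall_norm_le.1 hbd
  have hvn : (0:ℝ) < ‖v‖ := norm_pos_iff.2 hv0
  set t : ℝ := (C + ‖p‖ + 1) / ‖v‖ with ht
  have htn : 0 ≤ t := by
    apply div_nonneg _ hvn.le
    have h0 : 0 ≤ C := le_trans (norm_nonneg p) (hC p hp)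
    positivity
  have hmem : A.mulVec (p + t • v) ≤ b := by
    rw [Matrix.mulVec_add, Matrix.mulVec_smul]
    intro j
    have := hv j
    simp only [Pi.add_apply, Pi.smul_apply, smul_eq_mul, Pi.zero_apply] at *
    nlinarith [hp j]
  have hle := hC _ hmem
  have h1 : ‖t • v‖ - ‖p‖ ≤ ‖p + t • v‖ := by
    have := norm_add_le (p + t • v) (-p)
    have h2 : t • v = (p + t • v) + (-p) := by abel
    calc ‖t • v‖ - ‖p‖ = ‖(p + t • v) + (-p)‖ - ‖p‖ := by rw [← h2]
      _ ≤ (‖p + t • v‖ + ‖p‖) - ‖p‖ := by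
          have := norm_add_le (p + t • v) (-p); simp at this ⊢; linarith
      _ = ‖p + t • v‖ := by ring
  have h3 : ‖t • v‖ = t * ‖v‖ := by
    rw [norm_smul, Real.norm_eq_abs, abs_of_nonneg htn]
  have h4 : t * ‖v‖ = C + ‖p‖ + 1 := by
    rw [ht, div_mul_cancel₀ _ hvn.ne']
  linarith





/-- Balas's disjunctive formulation of the convex hull of the union of
finitely many nonempty polytopes. -/
theorem convexHull_union_polytopes (n m : ℕ) (r : Fin m → ℕ)
    (A : (i : Fin m) → Matrix (Fin (r i)) (Fin n) ℝ)
    (b : (i : Fin m) → Fin (r i) → ℝ)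
    (hne : ∀ i, {x : Fin n → ℝ | (A i).mulVec x ≤ b i}.Nonempty)
    (hbd : ∀ i, Bornology.IsBounded {x : Fin n → ℝ | (A i).mulVec x ≤ b i}) :
    convexHull ℝ (⋃ i, {x : Fin n → ℝ | (A i).mulVec x ≤ b i}) =
      {x : Fin n → ℝ | ∃ (xs : Fin m → Fin n → ℝ) (lam : Fin m → ℝ),
        (∀ i, 0 ≤ lam i) ∧ (∑ i, lam i) = 1 ∧ x = ∑ i, xs i ∧
        ∀ i, (A i).mulVec (xs i) ≤ lam i • b i} := by
  apply Set.Subset.antisymm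
  · apply convexHull_min
    · -- union ⊆ RHS
      intro x hx
      simp only [Set.mem_iUnion, Set.mem_setOf_eq] at hx
      obtain ⟨j, hj⟩ := hx
      refine ⟨fun i => if i = j then x else 0, fun i => if i = j then 1 else 0,
        fun i => by positivity, by simp, by simp, fun i => ?_⟩
      by_cases h : i = j
      · subst h; simpa using hj
      · simp [h, Matrix.mulVec_zero]
    · -- RHS convex
      rintro x ⟨xs, lam, hl0, hl1, hx, hc⟩ y ⟨ys, mu, hm0, hm1, hy, hd⟩ a c ha hc' hac
      refine ⟨fun i => a • xs i + c • ys i, fun i => a * lam i + c * mu i,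
        fun i => add_nonneg (mul_nonneg ha (hl0 i)) (mul_nonneg hc' (hm0 i)), ?_, ?_, fun i => ?_⟩
      · rw [Finset.sum_add_distrib, ← Finset.mul_sum, ← Finset.mul_sum, hl1, hm1]
        linarith
      · rw [hx, hy, Finset.sum_add_distrib, Finset.smul_sum, Finset.smul_sum]
      · rw [Matrix.mulVec_add, Matrix.mulVec_smul, Matrix.mulVec_smul]
        calc a • (A i).mulVec (xs i) + c • (A i).mulVec (ys i)
            ≤ a • (lam i • b i) + c • (mu i • b i) :=
              add_le_add (smul_le_smul_of_nonneg_left (hc i) ha)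
                (smul_le_smul_of_nonneg_left (hd i) hc')
          _ = (a * lam i + c * mu i) • b i := by
              rw [smul_smul, smul_smul, add_smul]
  · -- RHS ⊆ convexHull
    rintro x ⟨xs, lam, hl0, hl1, hx, hc⟩
    have hzero : ∀ i, lam i = 0 → xs i = 0 := by
      intro i h
      refine ray_zero (A i) (b i) (hbd i) (hne i).choose (hne i).choose_spec (xs i) ?_
      have := hc i
      rwa [h, zero_smul] at this
    set y : Fin m → Fin n → ℝ := fun i =>
      if h : lam i = 0 then (hne i).choose else (lam i)⁻¹ • xs i with hy
    have hymem : ∀ i, y i ∈ ⋃ j, {x : Fin n → ℝ | (A j).mulVec x ≤ b j} := by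
      intro i
      refine Set.mem_iUnion.2 ⟨i, ?_⟩
      simp only [hy, Set.mem_setOf_eq]
      split
      · exact (hne i).choose_spec
      · rename_i h
        rw [Matrix.mulVec_smul]
        have h1 : (lam i)⁻¹ • (A i).mulVec (xs i) ≤ (lam i)⁻¹ • (lam i • b i) :=
          smul_le_smul_of_nonneg_left (hc i) (inv_nonneg.2 (hl0 i))
        rwa [smul_smul, inv_mul_cancel₀ h, one_smul] at h1
    have hxeq : x = ∑ i, lam i • y i := by
      rw [hx]
      refine Finset.sum_congr rfl fun i _ => ?_
      simp only [hy]
      split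
      · rename_i h; rw [h, zero_smul, hzero i h]
      · rename_i h; rw [smul_smul, mul_inv_cancel₀ h, one_smul]
    rw [hxeq]
    exact (convex_convexHull ℝ _).sum_mem (fun i _ => hl0 i) hl1
      (fun i _ => subset_convexHull ℝ _ (hymem i))
end

section
/- Packing version of the main theorem (value form): Let A be a nonnegative k×n integer matrix, b ∈ ℤ^k, d ∈ ℤ^n, c ∈ ℝ^n all nonnegative, and γ ≥ k a positive integer. Let L be the convex hull of the union, over all integer vectors g with 0 ≤ g ≤ d, A g ≤ b, ∑ g_i ≤ γ, of the sets P_g = {x + g : 0 ≤ x ≤ d^g, A x ≤ b^g}, where for ∑ g_i = γ one sets b^g = b − A g, d^g_i = d_i − g_i for i ≤ μ(g) := min{i : g_i > 0} and d^g_i = 0 otherwise, and for ∑ g_i < γ one sets b^g = 0, d^g = 0. Then max{c·y : y ∈ L} ≤ (1 − k/γ)^{-1} · max{c·x : x ∈ ℤ^n, 0 ≤ x ≤ d, A x ≤ b}, i.e., the integrality gap of L is at most (1 − k/γ)^{-1}. -/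
/-!
Every point of `L` is a convex combination of points `x + g` of the pieces `P_g`, and the
half-space `(1 - k/γ) c·y ≤ OPT` is convex, so it suffices to bound a single point `x + g`.
Moving inside the polytope `{0 ≤ x ≤ d^g, A x ≤ b^g}` along a direction in the kernel of `A`
(which exists while more than `k` coordinates are fractional) without decreasing `c·x`, until
one more coordinate becomes integral, yields a point `x'` with `c·x ≤ c·x'` and at most `k`
fractional coordinates. Rounding `x'` down and adding `g` gives an integral solution, losing less
than `c_i` on each fractional coordinate `i`. Such an `i` has `d^g_i > 0`, hence `i ≤ μ(g)`, and
since `c` is monotone and `∑ g = γ` this gives `γ c_i ≤ c·g`. The loss is therefore at most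
`(k/γ) c·g ≤ (k/γ) c·(x + g)`.
-/

open Finset Matrix

variable {ι κ : Type*} [Fintype ι]

noncomputable def fractSupport (x : ι → ℝ) : Finset ι := by
  classical exact {i | Int.fract (x i) ≠ 0}

@[simp]
lemma mem_fractSupport {x : ι → ℝ} {i : ι} : i ∈ fractSupport x ↔ Int.fract (x i) ≠ 0 := by
  classical simp [fractSupport]

lemma exists_mulVec_eq_zero_of_card_lt [Fintype κ] (A : Matrix κ ι ℝ) (s : Finset ι)
    (hs : Fintype.card κ < #s) : ∃ w : ι → ℝ, w ≠ 0 ∧ A *ᵥ w = 0 ∧ ∀ i ∉ s, w i = 0 := by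
  classical
  have hker : LinearMap.ker (A.submatrix id ((↑) : s → ι)).mulVecLin ≠ ⊥ :=
    LinearMap.ker_ne_bot_of_finrank_lt (by simpa using hs)
  obtain ⟨v, hv, hv0⟩ := (Submodule.ne_bot_iff _).mp hker
  refine ⟨fun i => if h : i ∈ s then v ⟨i, h⟩ else 0, ?_, ?_, fun i hi => dif_neg hi⟩
  · obtain ⟨i, hi⟩ := Function.ne_iff.mp hv0
    exact Function.ne_iff.mpr ⟨i, by simpa using hi⟩
  · ext r
    rw [← congrFun (LinearMap.mem_ker.mp hv) r, mulVecLin_apply]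
    simp only [mulVec, dotProduct, submatrix_apply, id]
    rw [← sum_subset (subset_univ s) fun i _ hi => by rw [dif_neg hi, mul_zero], ← sum_attach,
      univ_eq_attach]
    exact sum_congr rfl fun i _ => by rw [dif_pos i.2]

lemma exists_pos_fract_add_mul_eq_zero {a v : ℝ} (ha : Int.fract a ≠ 0) (hv : v ≠ 0) :
    ∃ s > 0, (∀ t ∈ Set.Icc 0 s, a + t * v ∈ Set.Icc (⌊a⌋ : ℝ) ⌈a⌉) ∧
      Int.fract (a + s * v) = 0 := by
  have hfloor : (⌊a⌋ : ℝ) < a := lt_of_le_of_ne (Int.floor_le a) fun h => ha (by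
    rw [← h, Int.fract_intCast])
  have hceil : a < ⌈a⌉ := lt_of_le_of_ne (Int.le_ceil a) fun h => ha (by
    rw [h, Int.fract_intCast])
  rcases hv.lt_or_gt with hv | hv
  · refine ⟨(⌊a⌋ - a) / v, div_pos_of_neg_of_neg (by linarith) hv, fun t ⟨ht0, hts⟩ => ?_, ?_⟩
    · rw [le_div_iff_of_neg hv] at hts
      constructor <;> nlinarith
    · rw [div_mul_cancel₀ _ hv.ne, add_sub_cancel, Int.fract_intCast]
  · refine ⟨(⌈a⌉ - a) / v, div_pos (by linarith) hv, fun t ⟨ht0, hts⟩ => ?_, ?_⟩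
    · rw [le_div_iff₀ hv] at hts
      constructor <;> nlinarith
    · rw [div_mul_cancel₀ _ hv.ne', add_sub_cancel, Int.fract_intCast]

lemma exists_pos_fractSupport_add_smul_ssubset {x w : ι → ℝ} (hw : w ≠ 0)
    (hsupp : ∀ i, w i ≠ 0 → i ∈ fractSupport x) :
    ∃ t > (0 : ℝ), (∀ i, (x + t • w) i ∈ Set.Icc (⌊x i⌋ : ℝ) ⌈x i⌉) ∧
      fractSupport (x + t • w) ⊂ fractSupport x := by
  classical
  set G : Finset ι := {i | w i ≠ 0}
  have hG : G.Nonempty := by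
    obtain ⟨i, hi⟩ := Function.ne_iff.mp hw
    exact ⟨i, by simpa [G] using hi⟩
  have hstep : ∀ i ∈ G, ∃ s > 0, (∀ t ∈ Set.Icc 0 s, x i + t * w i ∈ Set.Icc (⌊x i⌋ : ℝ) ⌈x i⌉) ∧
      Int.fract (x i + s * w i) = 0 := fun i hi =>
    have hwi : w i ≠ 0 := by simpa [G] using hi
    exists_pos_fract_add_mul_eq_zero (mem_fractSupport.mp (hsupp i hwi)) hwi
  choose! s hs_pos hs_Icc hs_int using hstep
  have ht_pos : (0 : ℝ) < G.inf' hG s := (lt_inf'_iff hG).mpr hs_pos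
  obtain ⟨i₀, hi₀, ht⟩ := G.exists_mem_eq_inf' hG s
  refine ⟨G.inf' hG s, ht_pos, fun i => ?_, ?_⟩
  · by_cases hwi : w i = 0
    · simp [hwi, Int.floor_le, Int.le_ceil]
    · have hi : i ∈ G := by simpa [G] using hwi
      exact hs_Icc i hi _ ⟨ht_pos.le, inf'_le _ hi⟩
  · have hsub : fractSupport (x + G.inf' hG s • w) ⊆ fractSupport x := fun i hi => by
      by_cases hwi : w i = 0
      · simpa [hwi] using hi
      · exact hsupp i hwi
    refine (ssubset_iff_of_subset hsub).mpr ⟨i₀, hsupp i₀ (by simpa [G] using hi₀), ?_⟩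
    simpa [ht] using hs_int i₀ hi₀

def boxPolytope (A : Matrix κ ι ℝ) (β : κ → ℝ) (u : ι → ℤ) : Set (ι → ℝ) :=
  {x | 0 ≤ x ∧ (∀ i, x i ≤ u i) ∧ A *ᵥ x ≤ β}

section boxPolytope

variable {A : Matrix κ ι ℝ} {β : κ → ℝ} {u : ι → ℤ} {x : ι → ℝ}

lemma exists_mem_boxPolytope_card_fractSupport_lt [Fintype κ] (c : ι → ℝ)
    (hx : x ∈ boxPolytope A β u) (hcard : Fintype.card κ < #(fractSupport x)) :
    ∃ x' ∈ boxPolytope A β u, c ⬝ᵥ x ≤ c ⬝ᵥ x' ∧ #(fractSupport x') < #(fractSupport x) := by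
  obtain ⟨w, hw0, hAw, hws⟩ := exists_mulVec_eq_zero_of_card_lt A _ hcard
  wlog hcw : 0 ≤ c ⬝ᵥ w generalizing w
  · exact this (-w) (neg_ne_zero.mpr hw0) (by simp [mulVec_neg, hAw]) (by simpa using hws)
      (by rw [dotProduct_neg]; linarith)
  obtain ⟨t, ht, hIcc, hss⟩ :=
    exists_pos_fractSupport_add_smul_ssubset hw0 fun i hi => by_contra fun h => hi (hws i h)
  refine ⟨x + t • w, ⟨fun i => ?_, fun i => ?_, ?_⟩, ?_, card_lt_card hss⟩
  · exact (Int.cast_nonneg (Int.floor_nonneg.mpr (hx.1 i))).trans (hIcc i).1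
  · exact (hIcc i).2.trans (by exact_mod_cast Int.ceil_le.mpr (hx.2.1 i))
  · simpa [mulVec_add, mulVec_smul, hAw] using hx.2.2
  · simpa [dotProduct_add, dotProduct_smul] using mul_nonneg ht.le hcw

theorem exists_mem_boxPolytope_card_fractSupport_le [Fintype κ] (c : ι → ℝ)
    (hx : x ∈ boxPolytope A β u) :
    ∃ x' ∈ boxPolytope A β u, c ⬝ᵥ x ≤ c ⬝ᵥ x' ∧ #(fractSupport x') ≤ Fintype.card κ := by
  induction hm : #(fractSupport x) using Nat.strong_induction_on generalizing x with
  | _ m ih =>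
  by_cases hcard : #(fractSupport x) ≤ Fintype.card κ
  · exact ⟨x, hx, le_rfl, hcard⟩
  obtain ⟨x₁, hx₁, hcx₁, hlt⟩ := exists_mem_boxPolytope_card_fractSupport_lt c hx (not_le.mp hcard)
  obtain ⟨x', hx', hcx', hk⟩ := ih _ (hm ▸ hlt) hx₁ rfl
  exact ⟨x', hx', hcx₁.trans hcx', hk⟩

lemma pos_of_mem_fractSupport (hx : x ∈ boxPolytope A β u) {i : ι} (hi : i ∈ fractSupport x) :
    0 < u i := by
  by_contra! hu
  have hxi : x i = 0 := le_antisymm ((hx.2.1 i).trans (by exact_mod_cast hu)) (hx.1 i)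
  simp [hxi] at hi

end boxPolytope

lemma dotProduct_le_dotProduct_natFloor_add_sum_fractSupport {c x : ι → ℝ} (hc : 0 ≤ c)
    (hx : 0 ≤ x) : c ⬝ᵥ x ≤ c ⬝ᵥ (fun i => (⌊x i⌋₊ : ℝ)) + ∑ i ∈ fractSupport x, c i := by
  have hsplit : c ⬝ᵥ x = c ⬝ᵥ (fun i => (⌊x i⌋₊ : ℝ)) + ∑ i, c i * Int.fract (x i) := by
    simp only [dotProduct, ← sum_add_distrib, ← mul_add]
    refine sum_congr rfl fun i _ => ?_
    rw [natCast_floor_eq_intCast_floor (hx i), Int.floor_add_fract]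
  rw [hsplit, ← sum_subset (subset_univ _) fun i _ hi => by
    rw [mem_fractSupport, not_not] at hi
    rw [hi, mul_zero]]
  gcongr with i
  exact mul_le_of_le_one_right (hc i) (Int.fract_lt_one _).le

lemma natFloor_add_le_and_mulVec_le {A : Matrix κ ι ℕ} {b : κ → ℕ} {d g : ι → ℕ} {u : ι → ℤ}
    {β : κ → ℝ} {x : ι → ℝ} (hu : ∀ i, u i + g i ≤ d i) (hβ : ∀ r, β r + (A *ᵥ g) r ≤ b r)
    (hx : x ∈ boxPolytope (A.map (↑)) β u) :
    (fun i => ⌊x i⌋₊ + g i) ≤ d ∧ A *ᵥ (fun i => ⌊x i⌋₊ + g i) ≤ b := by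
  refine ⟨fun i => ?_, fun r => ?_⟩
  · have hfloor : (⌊x i⌋₊ : ℝ) ≤ u i := (Nat.floor_le (hx.1 i)).trans (hx.2.1 i)
    have := hu i
    change ⌊x i⌋₊ + g i ≤ d i
    zify
    linarith [(by exact_mod_cast hfloor : (⌊x i⌋₊ : ℤ) ≤ u i)]
  · have hfloor : A.map ((↑) : ℕ → ℝ) *ᵥ (fun i => (⌊x i⌋₊ : ℝ)) ≤ A.map (↑) *ᵥ x :=
      fun r => dotProduct_le_dotProduct_of_nonneg_left (fun i => Nat.floor_le (hx.1 i))
        fun i => Nat.cast_nonneg _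
    have hcast : (((A *ᵥ fun i => ⌊x i⌋₊) r : ℕ) : ℝ) =
        (A.map (↑) *ᵥ fun i => (⌊x i⌋₊ : ℝ)) r := by
      simpa [Function.comp_def] using RingHom.map_mulVec (Nat.castRingHom ℝ) A (fun i => ⌊x i⌋₊) r
    change (A *ᵥ ((fun i => ⌊x i⌋₊) + g)) r ≤ b r
    rw [mulVec_add, Pi.add_apply, ← Nat.cast_le (α := ℝ), Nat.cast_add, hcast]
    linarith [hfloor r, hx.2.2 r, hβ r]

section Knapsack

variable {d g : ι → ℕ} {γ : ℕ}

-- The paper's `b^g`; `pieceUpper` below is its `d^g`.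
def pieceRhs (A : Matrix κ ι ℕ) (b : κ → ℕ) (g : ι → ℕ) (γ : ℕ) (r : κ) : ℤ :=
  if ∑ j, g j = γ then (b r : ℤ) - ∑ i, (A r i : ℤ) * (g i : ℤ) else 0

lemma pieceRhs_add_le {A : Matrix κ ι ℕ} {b : κ → ℕ} (hgb : A *ᵥ g ≤ b) (r : κ) :
    (pieceRhs A b g γ r : ℝ) + (A *ᵥ g) r ≤ b r := by
  have hcast : (((A *ᵥ g) r : ℕ) : ℤ) = ∑ i, (A r i : ℤ) * (g i : ℤ) := by
    simp [mulVec, dotProduct]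
  have : (A *ᵥ g) r ≤ b r := hgb r
  exact_mod_cast show (pieceRhs A b g γ r : ℤ) + (A *ᵥ g) r ≤ b r by
    unfold pieceRhs
    split_ifs <;> omega

variable [LinearOrder ι]

def pieceUpper (d g : ι → ℕ) (γ : ℕ) (i : ι) : ℤ :=
  if (∑ j, g j = γ) ∧ (∀ j, j < i → g j = 0) then (d i : ℤ) - (g i : ℤ) else 0

lemma pieceUpper_add_le (hgd : g ≤ d) (i : ι) : pieceUpper d g γ i + g i ≤ d i := by
  have : g i ≤ d i := hgd i
  unfold pieceUpper
  split_ifs <;> omega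

lemma mul_le_dotProduct_of_pieceUpper_pos {c : ι → ℝ} (hc : Monotone c) {i : ι}
    (hi : 0 < pieceUpper d g γ i) : γ * c i ≤ c ⬝ᵥ fun j => (g j : ℝ) := by
  obtain ⟨hsum, hlt⟩ : ∑ j, g j = γ ∧ ∀ j, j < i → g j = 0 := by
    by_contra h
    simp [pieceUpper, h] at hi
  calc (γ : ℝ) * c i = ∑ j, c i * g j := by rw [← hsum, ← mul_sum, Nat.cast_sum, mul_comm]
    _ ≤ ∑ j, c j * g j := sum_le_sum fun j _ => by
        rcases lt_or_ge j i with hji | hij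
        · simp [hlt j hji]
        · exact mul_le_mul_of_nonneg_right (hc hij) (Nat.cast_nonneg _)

theorem exists_knapsack_solution_of_mem_piece [Fintype κ] {A : Matrix κ ι ℕ} {b : κ → ℕ} {c : ι → ℝ}
    (hc0 : 0 ≤ c) (hcmono : Monotone c) (hγ : 0 < γ) (hgd : g ≤ d) (hgb : A *ᵥ g ≤ b)
    {x : ι → ℝ}
    (hx : x ∈ boxPolytope (A.map (↑)) (fun r => pieceRhs A b g γ r) (pieceUpper d g γ)) :
    ∃ z : ι → ℕ, z ≤ d ∧ A *ᵥ z ≤ b ∧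
      (1 - (Fintype.card κ : ℝ) / γ) * (c ⬝ᵥ (x + fun i => (g i : ℝ))) ≤
        c ⬝ᵥ fun i => (z i : ℝ) := by
  obtain ⟨x', hx', hcx, hcard⟩ := exists_mem_boxPolytope_card_fractSupport_le c hx
  obtain ⟨hzd, hzb⟩ :=
    natFloor_add_le_and_mulVec_le (pieceUpper_add_le hgd) (pieceRhs_add_le hgb) hx'
  refine ⟨_, hzd, hzb, ?_⟩
  set cg := c ⬝ᵥ fun i => (g i : ℝ)
  set q := (Fintype.card κ : ℝ) / γ
  have hγ' : (0 : ℝ) < γ := Nat.cast_pos.mpr hγ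
  have hloss : ∑ i ∈ fractSupport x', c i ≤ q * cg := calc
    _ ≤ #(fractSupport x') • (cg / γ) := sum_le_card_nsmul _ _ _ fun i hi =>
        (le_div_iff₀' hγ').mpr
          (mul_le_dotProduct_of_pieceUpper_pos hcmono (pos_of_mem_fractSupport hx' hi))
    _ ≤ Fintype.card κ * (cg / γ) := by
        rw [nsmul_eq_mul]
        gcongr
        exact div_nonneg (dotProduct_nonneg_of_nonneg hc0 fun i => Nat.cast_nonneg _) hγ'.le
    _ = q * cg := by ring
  have hround := dotProduct_le_dotProduct_natFloor_add_sum_fractSupport hc0 hx'.1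
  have hq : 0 ≤ q * (c ⬝ᵥ x) := mul_nonneg (by positivity) (dotProduct_nonneg_of_nonneg hc0 hx.1)
  have hz : (c ⬝ᵥ fun i => ((⌊x' i⌋₊ + g i : ℕ) : ℝ)) = (c ⬝ᵥ fun i => (⌊x' i⌋₊ : ℝ)) + cg := by
    simp only [Nat.cast_add]
    exact dotProduct_add _ _ _
  rw [hz, dotProduct_add]
  linarith

end Knapsack

theorem multidim_knapsack_integrality_gap_general (n k γ : ℕ) (hγ : 0 < γ)
    (A : Matrix (Fin k) (Fin n) ℕ) (b : Fin k → ℕ) (d : Fin n → ℕ)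
    (c : Fin n → ℝ) (hc0 : ∀ i, 0 ≤ c i) (hcmono : Monotone c) :
    ∀ y ∈ convexHull ℝ
      (⋃ g ∈ {g : Fin n → ℕ | g ≤ d ∧ A.mulVec g ≤ b ∧ ∑ i, g i ≤ γ},
        {y : Fin n → ℝ | ∃ x : Fin n → ℝ,
          y = x + (fun i => (g i : ℝ)) ∧ 0 ≤ x ∧
          (∀ i, x i ≤ ((if (∑ j, g j = γ) ∧ (∀ j, j < i → g j = 0)
              then ((d i : ℤ) - (g i : ℤ)) else 0 : ℤ) : ℝ)) ∧
          (∀ r : Fin k, ∑ i, (A r i : ℝ) * x i ≤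
            ((if ∑ j, g j = γ
              then ((b r : ℤ) - ∑ i, (A r i : ℤ) * (g i : ℤ)) else 0 : ℤ) : ℝ))}),
      ∃ x : Fin n → ℕ, x ≤ d ∧ A.mulVec x ≤ b ∧
        (1 - (k : ℝ) / γ) * (∑ i, c i * y i) ≤ ∑ i, c i * (x i : ℝ) := by
  obtain ⟨opt, ⟨hopt_d, hopt_b⟩, hopt⟩ :=
    Set.exists_max_image {z : Fin n → ℕ | z ≤ d ∧ A *ᵥ z ≤ b} (fun z => c ⬝ᵥ fun i => (z i : ℝ))
      ((Set.finite_Iic d).subset fun z hz => hz.1) ⟨0, fun i => Nat.zero_le _, by simp⟩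
  intro y hy
  have hconv : Convex ℝ {y | (1 - (k : ℝ) / γ) * (c ⬝ᵥ y) ≤ c ⬝ᵥ fun i => (opt i : ℝ)} :=
    convex_halfSpace_le ((LinearMap.mulLeft ℝ _).comp (dotProductBilin ℝ ℝ c)).isLinear _
  refine ⟨opt, hopt_d, hopt_b, convexHull_min ?_ hconv hy⟩
  intro p hp
  obtain ⟨g, ⟨hgd, hgb, -⟩, x, rfl, hx⟩ := Set.mem_iUnion₂.mp hp
  -- `convert`: the `Decidable` instances of the two `if`s differ
  have hx' : x ∈ boxPolytope (A.map (↑)) (fun r => (pieceRhs A b g γ r : ℝ)) (pieceUpper d g γ) :=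
    ⟨hx.1, fun i => by rw [pieceUpper]; convert hx.2.1 i, hx.2.2⟩
  obtain ⟨z, hzd, hzb, hz⟩ :=
    exists_knapsack_solution_of_mem_piece (c := c) hc0 hcmono hγ hgd hgb hx'
  simpa using hz.trans (hopt z ⟨hzd, hzb⟩)

/-- Packing version of the main theorem (value form): the disjunctive LP `L`
for `k`-dimensional knapsack has integrality gap at most `(1 - k/γ)⁻¹`:
for every fractional point `y` of `L` there is an integral feasible solution
`x` with `(1 - k/γ) · (c·y) ≤ c·x`. -/
theorem multidim_knapsack_integrality_gap (n k γ : ℕ) (hγ : 0 < γ) (hkγ : k ≤ γ)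
    (A : Matrix (Fin k) (Fin n) ℕ) (b : Fin k → ℕ) (d : Fin n → ℕ)
    (c : Fin n → ℝ) (hc0 : ∀ i, 0 ≤ c i) (hcmono : Monotone c) :
    ∀ y ∈ convexHull ℝ
      (⋃ g ∈ {g : Fin n → ℕ | g ≤ d ∧ A.mulVec g ≤ b ∧ ∑ i, g i ≤ γ},
        {y : Fin n → ℝ | ∃ x : Fin n → ℝ,
          y = x + (fun i => (g i : ℝ)) ∧ 0 ≤ x ∧
          (∀ i, x i ≤ ((if (∑ j, g j = γ) ∧ (∀ j, j < i → g j = 0)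
              then ((d i : ℤ) - (g i : ℤ)) else 0 : ℤ) : ℝ)) ∧
          (∀ r : Fin k, ∑ i, (A r i : ℝ) * x i ≤
            ((if ∑ j, g j = γ
              then ((b r : ℤ) - ∑ i, (A r i : ℤ) * (g i : ℤ)) else 0 : ℤ) : ℝ))}),
      ∃ x : Fin n → ℕ, x ≤ d ∧ A.mulVec x ≤ b ∧
        (1 - (k : ℝ) / γ) * (∑ i, c i * y i) ≤ ∑ i, c i * (x i : ℝ) :=
  multidim_knapsack_integrality_gap_general n k γ hγ A b d c hc0 hcmono
end

section
/- Covering version rounding: Let x* be an extreme point of {x ∈ ℝ^n : 0 ≤ x ≤ d, A x ≥ b} with A a nonnegative k×n matrix and d ∈ ℤ^n. Then ⌈x*⌉ (componentwise ceiling) is feasible, i.e., 0 ≤ ⌈x*⌉ ≤ d and A ⌈x*⌉ ≥ b, and for nonnegative c, c · ⌈x*⌉ ≤ c · x* + k · c_max where c_max = max_i c_i. -/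
/-- Covering version rounding: the componentwise ceiling of an extreme point
of the covering knapsack LP is feasible, and its cost exceeds the fractional
cost by at most `k * cmax`. -/
theorem ceil_extremePoint_covering (n k : ℕ)
    (A : Matrix (Fin k) (Fin n) ℝ) (hA : ∀ i j, 0 ≤ A i j)
    (b : Fin k → ℝ) (d : Fin n → ℤ) (c : Fin n → ℝ) (hc : ∀ i, 0 ≤ c i)
    (cmax : ℝ) (hcmax : IsGreatest (Set.range c) cmax)
    (x : Fin n → ℝ)
    (hx : x ∈ Set.extremePoints ℝ
      {y : Fin n → ℝ | 0 ≤ y ∧ (∀ i, y i ≤ (d i : ℝ)) ∧ b ≤ A.mulVec y}) :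
    (0 ≤ fun i => (⌈x i⌉ : ℝ)) ∧ (∀ i, (⌈x i⌉ : ℝ) ≤ (d i : ℝ)) ∧
      b ≤ A.mulVec (fun i => (⌈x i⌉ : ℝ)) ∧
      ∑ i, c i * (⌈x i⌉ : ℝ) ≤ (∑ i, c i * x i) + k * cmax := by
  classical
  obtain ⟨⟨hx0, hxd, hxb⟩, hext⟩ := hx
  set F : Finset (Fin n) := Finset.univ.filter (fun i => (⌈x i⌉ : ℝ) ≠ x i) with hFdef
  have hmemF : ∀ i, i ∈ F ↔ (⌈x i⌉ : ℝ) ≠ x i := by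
    intro i; simp [hFdef]
  have hfrac : ∀ i ∈ F, 0 < x i ∧ x i < (d i : ℝ) := by
    intro i hi
    have hne := (hmemF i).mp hi
    constructor
    · rcases lt_or_eq_of_le (hx0 i) with h | h
      · exact h
      · exact absurd (by rw [← h]; norm_num) hne
    · rcases lt_or_eq_of_le (hxd i) with h | h
      · exact h
      · exact absurd (by rw [h]; norm_num) hne
  -- the key cardinality bound from extremality
  have hcard : F.card ≤ k := by
    by_contra hk
    push_neg at hk
    let E : (↥F → ℝ) →ₗ[ℝ] (Fin n → ℝ) :=
      { toFun := fun z i => if h : i ∈ F then z ⟨i, h⟩ else 0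
        map_add' := by intro z w; funext i; by_cases h : i ∈ F <;> simp [h]
        map_smul' := by intro r z; funext i; by_cases h : i ∈ F <;> simp [h] }
    let ψ : (↥F → ℝ) →ₗ[ℝ] (Fin k → ℝ) := A.mulVecLin.comp E
    have hψ : ¬ Function.Injective ψ := by
      intro hinj
      have hle := LinearMap.finrank_le_finrank_of_injective hinj
      rw [Module.finrank_fintype_fun_eq_card, Module.finrank_fintype_fun_eq_card] at hle
      rw [Fintype.card_coe] at hle
      rw [Fintype.card_fin] at hle
      omega
    have hker : LinearMap.ker ψ ≠ ⊥ := fun h => hψ (LinearMap.ker_eq_bot.mp h)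
    obtain ⟨z, hzker, hz0⟩ := Submodule.exists_mem_ne_zero_of_ne_bot hker
    set w : Fin n → ℝ := E z with hw
    have hwF : ∀ i, i ∉ F → w i = 0 := by intro i hi; simp [hw, E, hi]
    have hAw : A.mulVec w = 0 := by
      have := LinearMap.mem_ker.mp hzker
      simpa [ψ, Matrix.mulVecLin] using this
    have hw0 : w ≠ 0 := by
      intro h
      apply hz0
      funext i
      have h2 := congrFun h (i : Fin n)
      simpa [hw, E, i.2] using h2
    have hFne : F.Nonempty := Finset.card_pos.mp (by omega)
    set δ : ℝ := F.inf' hFne (fun i => min (x i) ((d i : ℝ) - x i)) with hδdef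
    have hδpos : 0 < δ := by
      rw [hδdef, Finset.lt_inf'_iff]
      intro i hi
      have := hfrac i hi
      simp [lt_min_iff]
      constructor <;> linarith [this.1, this.2]
    have hδle : ∀ i ∈ F, δ ≤ x i ∧ δ ≤ (d i : ℝ) - x i := by
      intro i hi
      have h := Finset.inf'_le (f := fun i => min (x i) ((d i : ℝ) - x i)) hi
      rw [← hδdef] at h
      exact ⟨le_trans h (min_le_left _ _), le_trans h (min_le_right _ _)⟩
    set M : ℝ := ∑ i, |w i| with hMdef
    have hM0 : 0 ≤ M := Finset.sum_nonneg fun i _ => abs_nonneg _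
    have hMle : ∀ i, |w i| ≤ M := by
      intro i
      exact Finset.single_le_sum (f := fun i => |w i|) (fun j _ => abs_nonneg _)
        (Finset.mem_univ i)
    set ε : ℝ := δ / (M + 1) with hεdef
    have hεpos : 0 < ε := div_pos hδpos (by linarith)
    have hεw : ∀ i, ε * |w i| ≤ δ := by
      intro i
      calc ε * |w i| ≤ ε * (M + 1) := by
            apply mul_le_mul_of_nonneg_left _ hεpos.le
            linarith [hMle i]
        _ = δ := by rw [hεdef]; field_simp
    have hmem : ∀ s : ℝ, |s| ≤ ε →
        (x + s • w) ∈ {y : Fin n → ℝ | 0 ≤ y ∧ (∀ i, y i ≤ (d i : ℝ)) ∧ b ≤ A.mulVec y} := by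
      intro s hs
      have habs : ∀ i, |s * w i| ≤ δ := by
        intro i
        rw [abs_mul]
        calc |s| * |w i| ≤ ε * |w i| := mul_le_mul_of_nonneg_right hs (abs_nonneg _)
          _ ≤ δ := hεw i
      refine ⟨?_, ?_, ?_⟩
      · intro i
        simp only [Pi.add_apply, Pi.smul_apply, smul_eq_mul, Pi.zero_apply]
        by_cases hi : i ∈ F
        · have h1 := abs_le.mp (habs i)
          have h2 := (hδle i hi).1
          linarith [h1.1]
        · rw [hwF i hi]
          simpa using hx0 i
      · intro i
        simp only [Pi.add_apply, Pi.smul_apply, smul_eq_mul]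
        by_cases hi : i ∈ F
        · have h1 := abs_le.mp (habs i)
          have h2 := (hδle i hi).2
          linarith [h1.2]
        · rw [hwF i hi]
          simpa using hxd i
      · rw [Matrix.mulVec_add, Matrix.mulVec_smul, hAw]
        simpa using hxb
    have h1 := hmem ε (by rw [abs_of_pos hεpos])
    have h2 := hmem (-ε) (by rw [abs_neg, abs_of_pos hεpos])
    have hseg : x ∈ openSegment ℝ (x + ε • w) (x + (-ε) • w) := by
      refine ⟨1/2, 1/2, by norm_num, by norm_num, by norm_num, ?_⟩
      module
    have heq := hext h1 h2 hseg
    have : ε • w = 0 := by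
      have := congrArg (· - x) heq
      simpa [add_sub_cancel_left] using this
    rcases smul_eq_zero.mp this with h | h
    · exact absurd h (ne_of_gt hεpos)
    · exact hw0 h
  -- feasibility and cost bound
  have hceil_ge : ∀ i, x i ≤ (⌈x i⌉ : ℝ) := fun i => Int.le_ceil _
  have hcmax0 : 0 ≤ cmax := by
    obtain ⟨j, hj⟩ := hcmax.1
    rw [← hj]; exact hc j
  refine ⟨?_, ?_, ?_, ?_⟩
  · intro i
    simp only [Pi.zero_apply]
    exact_mod_cast Int.ceil_nonneg (hx0 i)
  · intro i
    exact_mod_cast Int.ceil_le.mpr (hxd i)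
  · intro j
    calc b j ≤ A.mulVec x j := hxb j
      _ ≤ A.mulVec (fun i => (⌈x i⌉ : ℝ)) j := by
          simp only [Matrix.mulVec, dotProduct]
          apply Finset.sum_le_sum
          intro i _
          exact mul_le_mul_of_nonneg_left (hceil_ge i) (hA j i)
  · have hdiff : ∑ i, c i * (⌈x i⌉ : ℝ) - ∑ i, c i * x i
        = ∑ i, c i * ((⌈x i⌉ : ℝ) - x i) := by
      rw [← Finset.sum_sub_distrib]
      congr 1
      funext i
      ring
    have hrestrict : ∑ i, c i * ((⌈x i⌉ : ℝ) - x i)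
        = ∑ i ∈ F, c i * ((⌈x i⌉ : ℝ) - x i) := by
      symm
      apply Finset.sum_subset F.subset_univ
      intro i _ hi
      have : (⌈x i⌉ : ℝ) = x i := not_not.mp fun h => hi ((hmemF i).mpr h)
      rw [this]; ring
    have hbound : ∑ i ∈ F, c i * ((⌈x i⌉ : ℝ) - x i) ≤ (k : ℝ) * cmax := by
      calc ∑ i ∈ F, c i * ((⌈x i⌉ : ℝ) - x i) ≤ ∑ _i ∈ F, cmax * 1 := by
            apply Finset.sum_le_sum
            intro i _
            apply mul_le_mul (hcmax.2 (Set.mem_range_self i))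
              (by linarith [Int.ceil_lt_add_one (x i)])
              (by linarith [hceil_ge i]) hcmax0
        _ = (F.card : ℝ) * cmax := by simp [mul_comm]
        _ ≤ (k : ℝ) * cmax := by
            apply mul_le_mul_of_nonneg_right _ hcmax0
            exact_mod_cast hcard
    linarith [hdiff ▸ hrestrict ▸ hbound]
end
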